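/- arXiv:1403.5754 — 3 statements merged into one kernel-verified Lean document; each statement's English description precedes it below -/
import Mathlib

section
/- Let r ≥ 3 and n ≥ 2. Let π₀ = B(V) be a q-subgeometry of PG(r-1,q^n) and l_∞ = PG(U) a line not contained in the extension of any hyperplane of π₀, and let S = S(π₀,l_∞). Then there exists an r-dimensional K-subspace U' of U with B(U') = S such that for every point x of S and every integer j ≥ 1 the following are equivalent: (i) the weight of x with respect to U' equals j, i.e. dim_K(U' ∩ x) = j; (ii) the number of K-subspaces H of V with dim_K H = r-1 such that x is contained in the L-span of H equals (q^j - 1)/(q - 1). -/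
/-!
A `K`-basis of `V` is an `L`-basis of `L^r`, so every `K`-linear form `φ` on `V` extends to an
`L`-linear form `φ_L`, and the `L`-span of the hyperplane `ker φ` of `V` is `ker φ_L`.
For a basis `e₀, e₁` of `U`, the vector `φ_L(e₁) e₀ - φ_L(e₀) e₁` spans the point of `l_∞` on
which `φ_L` vanishes. This defines a `K`-linear map `V^* → U`, injective because `l_∞` lies in
no extended hyperplane, and `U'` is its image. For a point `P` of `l_∞` let `D_P` be the space of
forms `φ` with `φ_L(P) = 0`: then `U' ∩ P` is the image of `D_P`, and the hyperplanes whose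
extension contains `P` correspond to the points of `PG(D_P)`, of which there are
`(q^j - 1)/(q - 1)` when `dim D_P = j`.
-/

open Submodule Module
open scoped LinearAlgebra.Projectivization

/-- `BSet L X` is the set of projective points (1-dimensional `L`-subspaces of `W`)
spanned by the nonzero vectors of `X`. -/
def BSet (L : Type*) [Field L] {W : Type*} [AddCommGroup W] [Module L W]
    (X : Set W) : Set (Submodule L W) :=
  {P | ∃ x ∈ X, x ≠ 0 ∧ P = Submodule.span L {x}}

/-- The splash of the `q`-subgeometry `B(V)` of `PG(W)` on the line `PG(U)`:
the set of points of `PG(U)` lying in the `L`-span (extension) of some hyperplane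
(`(r-1)`-dimensional `K`-subspace) of `V`. -/
def Splash (K L : Type*) [Field K] [Field L] [Algebra K L]
    {W : Type*} [AddCommGroup W] [Module L W] [Module K W] [IsScalarTower K L W]
    (V : Submodule K W) (U : Submodule L W) (r : ℕ) : Set (Submodule L W) :=
  {P | Module.finrank L P = 1 ∧ P ≤ U ∧
    ∃ H : Submodule K W, H ≤ V ∧ Module.finrank K H = r - 1 ∧
      P ≤ Submodule.span L (H : Set W)}

namespace Module.Dual

variable {K E : Type*} [Field K] [AddCommGroup E] [Module K E] [FiniteDimensional K E]

theorem exists_ne_zero_ker_eq (H : Submodule K E) (hH : finrank K H + 1 = finrank K E) :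
    ∃ φ : Dual K E, φ ≠ 0 ∧ LinearMap.ker φ = H := by
  have hann : finrank K H.dualAnnihilator = 1 := by
    have := Subspace.finrank_add_finrank_dualAnnihilator_eq H
    omega
  obtain ⟨φ, hφ, hφ0⟩ := exists_mem_ne_zero_of_ne_bot (p := H.dualAnnihilator) fun h => by
    rw [h, finrank_bot] at hann; exact zero_ne_one hann
  refine ⟨φ, hφ0, (eq_of_le_of_finrank_eq (fun x hx => (mem_dualAnnihilator φ).mp hφ x hx) ?_).symm⟩
  have := finrank_ker_add_one_of_ne_zero hφ0
  omega

theorem exists_smul_eq_of_ker_eq {φ ψ : Dual K E} (hψ : ψ ≠ 0)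
    (h : LinearMap.ker φ = LinearMap.ker ψ) : ∃ a : K, a • ψ = φ := by
  obtain ⟨x, hx⟩ : ∃ x, ψ x ≠ 0 := by
    by_contra! h0; exact hψ (LinearMap.ext h0)
  have hφx : φ x ≠ 0 := fun h0 => hx (by rwa [← LinearMap.mem_ker, ← h])
  refine ⟨φ x / ψ x, eq_of_ker_eq_of_apply_eq x ?_ ?_ ?_⟩
  · rw [LinearMap.ker_smul _ _ (div_ne_zero hφx hx), h]
  · simp [hx]
  · simp [hx, hφx]

end Module.Dual

section Hyperplanes

variable {K W : Type*} [Field K] [AddCommGroup W] [Module K W] {V : Submodule K W}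
  [FiniteDimensional K V]

theorem finrank_map_ker_add_one {φ : Dual K V} (hφ : φ ≠ 0) :
    finrank K ((LinearMap.ker φ).map V.subtype) + 1 = finrank K V := by
  rw [finrank_map_subtype_eq]
  exact Module.Dual.finrank_ker_add_one_of_ne_zero hφ

theorem exists_ne_zero_map_ker_eq {H : Submodule K W} (hHV : H ≤ V)
    (hH : finrank K H + 1 = finrank K V) :
    ∃ φ : Dual K V, φ ≠ 0 ∧ (LinearMap.ker φ).map V.subtype = H := by
  have hH' : (H.comap V.subtype).map V.subtype = H := by
    rw [map_comap_subtype, inf_eq_right.mpr hHV]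
  obtain ⟨φ, hφ0, hφ⟩ := Module.Dual.exists_ne_zero_ker_eq (H.comap V.subtype)
    (by rwa [← finrank_map_subtype_eq, hH'])
  exact ⟨φ, hφ0, hφ ▸ hH'⟩

end Hyperplanes

theorem exists_eq_span_singleton_of_finrank_eq_one {L W : Type*} [Field L] [AddCommGroup W]
    [Module L W] {P : Submodule L W} (hP : finrank L P = 1) : ∃ u ≠ 0, P = L ∙ u := by
  obtain ⟨u, hu0, hu⟩ := finrank_eq_one_iff'.1 hP
  refine ⟨u, by simpa using hu0, le_antisymm (fun x hx => ?_) ?_⟩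
  · obtain ⟨c, hc⟩ := hu ⟨x, hx⟩
    exact mem_span_singleton.2 ⟨c, congrArg Subtype.val hc⟩
  · exact (span_singleton_le_iff_mem _ _).2 u.2

theorem exists_linearIndependent_pair_span_eq {L W : Type*} [Field L] [AddCommGroup W]
    [Module L W] {U : Submodule L W} (hU : finrank L U = 2) :
    ∃ e₀ e₁ : W, LinearIndependent L ![e₀, e₁] ∧ span L {e₀, e₁} = U := by
  have := Module.finite_of_finrank_pos (hU ▸ two_pos : 0 < finrank L U)
  let b := finBasisOfFinrankEq L U hU
  have hb : U.subtype ∘ b = ![(b 0 : W), b 1] := by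
    ext i; fin_cases i <;> rfl
  refine ⟨b 0, b 1, hb ▸ b.linearIndependent.map' U.subtype U.ker_subtype, ?_⟩
  rw [← Matrix.range_cons_cons_empty _ _ ![], ← hb, Set.range_comp, span_image, b.span_eq,
    Submodule.map_top, range_subtype]

theorem Nat.geomSum_strictMono {q : ℕ} (hq : 1 ≤ q) :
    StrictMono fun n => ∑ i ∈ Finset.range n, q ^ i :=
  strictMono_nat_of_lt_succ fun n => by
    rw [Finset.sum_range_succ]
    have := Nat.one_le_pow n q hq
    omega

section SpanOverExtension

variable {K L W : Type*} [Field K] [Field L] [Algebra K L]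
  [AddCommGroup W] [Module L W] [Module K W] [IsScalarTower K L W]

theorem finrank_span_le_finrank (H : Submodule K W) [FiniteDimensional K H] :
    finrank L (span L (H : Set W)) ≤ finrank K H := by
  let b := Module.finBasis K H
  have hb : span K (Set.range (H.subtype ∘ b)) = H := by
    rw [Set.range_comp, span_image, b.span_eq, Submodule.map_top, range_subtype]
  have : span L (H : Set W) = span L (Set.range (H.subtype ∘ b)) := by
    rw [← span_span_of_tower (S := L) (R := K) (s := Set.range (H.subtype ∘ b)), hb]
  rw [this]
  exact (finrank_range_le_card _).trans (Fintype.card_fin _).le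

theorem finrank_span_eq_finrank_of_le [FiniteDimensional L W] {V H : Submodule K W}
    [FiniteDimensional K V]
    (hspan : span L (V : Set W) = ⊤) (hrank : finrank K V = finrank L W) (hHV : H ≤ V) :
    finrank L (span L (H : Set W)) = finrank K H := by
  have := finiteDimensional_of_le hHV
  obtain ⟨C, hC⟩ := (H.comap V.subtype).exists_isCompl
  have hH : (H.comap V.subtype).map V.subtype = H := by
    rw [map_comap_subtype, inf_eq_right.mpr hHV]
  have hsum := finrank_add_eq_of_isCompl hC
  rw [← finrank_map_subtype_eq, hH, ← finrank_map_subtype_eq] at hsum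
  have hsup : span L (H : Set W) ⊔ span L (C.map V.subtype : Set W) = ⊤ := by
    rw [← span_union, ← span_span_of_tower K, span_union, span_eq, span_eq, ← hH,
      ← Submodule.map_sup, hC.sup_eq_top, Submodule.map_top, range_subtype, hspan]
  have hle := finrank_add_le_finrank_add_finrank (span L (H : Set W))
    (span L (C.map V.subtype : Set W))
  rw [hsup, finrank_top] at hle
  have h1 := finrank_span_le_finrank (L := L) H
  have h2 := finrank_span_le_finrank (L := L) (C.map V.subtype)
  omega

theorem exists_basis_coe_eq {K L W : Type*} [Field K] [Field L] [Algebra K L]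
    [AddCommGroup W] [Module L W] [Module K W] [IsScalarTower K L W] {V : Submodule K W} {n : ℕ}
    [FiniteDimensional K V] (hspan : span L (V : Set W) = ⊤) (hV : finrank K V = n)
    (hW : finrank L W = n) :
    ∃ (bV : Basis (Fin n) K V) (v : Basis (Fin n) L W), ∀ i, (bV i : W) = v i := by
  let bV := finBasisOfFinrankEq K V hV
  have htop : ⊤ ≤ span L (Set.range (V.subtype ∘ bV)) := by
    rw [← span_span_of_tower (R := K), Set.range_comp, span_image, bV.span_eq, Submodule.map_top,
      range_subtype, hspan]
  have hcard : Fintype.card (Fin n) = finrank L W := by simp [hW]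
  refine ⟨bV, basisOfTopLeSpanOfCardEqFinrank _ htop hcard, fun i => ?_⟩
  rw [coe_basisOfTopLeSpanOfCardEqFinrank]
  rfl

end SpanOverExtension

section FormExtension

variable {K L W : Type*} [Field K] [Field L] [Algebra K L]
  [AddCommGroup W] [Module L W] [Module K W]
  {ι : Type*} {V : Submodule K W} (bV : Basis ι K V) (v : Basis ι L W)

noncomputable def extendForm : Dual K V →ₗ[K] Dual L W where
  toFun φ := v.constr L fun i => algebraMap K L (φ (bV i))
  map_add' φ ψ := v.ext fun i => by
    simp only [Basis.constr_basis, LinearMap.add_apply, map_add]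
  map_smul' c φ := v.ext fun i => by
    simp only [Basis.constr_basis, LinearMap.smul_apply, smul_eq_mul, map_mul, RingHom.id_apply,
      Algebra.smul_def]

theorem extendForm_apply_basis (φ : Dual K V) (i : ι) :
    extendForm bV v φ (v i) = algebraMap K L (φ (bV i)) :=
  v.constr_basis L _ i

variable [IsScalarTower K L W] {bV v}

theorem extendForm_apply_coe (hv : ∀ i, (bV i : W) = v i) (φ : Dual K V) (x : V) :
    extendForm bV v φ x = algebraMap K L (φ x) := by
  have : (extendForm bV v φ).restrictScalars K ∘ₗ V.subtype = Algebra.linearMap K L ∘ₗ φ :=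
    bV.ext fun i => by simp [hv, extendForm_apply_basis]
  exact LinearMap.congr_fun this x

theorem extendForm_ne_zero (hv : ∀ i, (bV i : W) = v i) {φ : Dual K V} (hφ : φ ≠ 0) :
    extendForm bV v φ ≠ 0 := by
  obtain ⟨x, hx⟩ : ∃ x, φ x ≠ 0 := by
    by_contra! h0; exact hφ (LinearMap.ext h0)
  intro h0
  apply hx
  simpa [extendForm_apply_coe hv] using LinearMap.congr_fun h0 x

theorem span_map_ker_eq_ker_extendForm [Fintype ι] (hv : ∀ i, (bV i : W) = v i) {φ : Dual K V}
    (hφ : φ ≠ 0) :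
    span L ((LinearMap.ker φ).map V.subtype : Set W) = LinearMap.ker (extendForm bV v φ) := by
  have := Module.Finite.of_basis v
  have := Module.Finite.of_basis bV
  have hspan : span L (V : Set W) = ⊤ := by
    rw [eq_top_iff, ← v.span_eq]
    exact span_mono (Set.range_subset_iff.2 fun i => hv i ▸ (bV i).2)
  have hrank : finrank K V = finrank L W := by
    rw [finrank_eq_card_basis bV, finrank_eq_card_basis v]
  have hle : span L ((LinearMap.ker φ).map V.subtype : Set W) ≤
      LinearMap.ker (extendForm bV v φ) :=
    span_le.2 <| by
      rintro _ ⟨x, hx, rfl⟩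
      simp_all [extendForm_apply_coe hv]
  refine eq_of_le_of_finrank_eq hle ?_
  rw [finrank_span_eq_finrank_of_le hspan hrank (map_subtype_le _ _), finrank_map_subtype_eq]
  have h1 := Module.Dual.finrank_ker_add_one_of_ne_zero hφ
  have h2 := Module.Dual.finrank_ker_add_one_of_ne_zero (extendForm_ne_zero hv hφ)
  omega

end FormExtension

section LineKernel

variable {L W : Type*} [Field L] [AddCommGroup W] [Module L W] (e₀ e₁ : W)

noncomputable def lineKernelVec : Dual L W →ₗ[L] W :=
  (Dual.eval L W e₁).smulRight e₀ - (Dual.eval L W e₀).smulRight e₁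

variable {e₀ e₁}

theorem lineKernelVec_apply (f : Dual L W) :
    lineKernelVec e₀ e₁ f = f e₁ • e₀ - f e₀ • e₁ := rfl

theorem lineKernelVec_mem (f : Dual L W) : lineKernelVec e₀ e₁ f ∈ span L {e₀, e₁} :=
  sub_mem (smul_mem _ _ (subset_span (by simp))) (smul_mem _ _ (subset_span (by simp)))

theorem apply_lineKernelVec (f : Dual L W) : f (lineKernelVec e₀ e₁ f) = 0 := by
  simp [lineKernelVec_apply, mul_comm]

theorem lineKernelVec_eq_zero_iff (he : LinearIndependent L ![e₀, e₁]) (f : Dual L W) :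
    lineKernelVec e₀ e₁ f = 0 ↔ span L {e₀, e₁} ≤ LinearMap.ker f := by
  rw [span_le, Set.insert_subset_iff, Set.singleton_subset_iff, SetLike.mem_coe,
    SetLike.mem_coe, LinearMap.mem_ker, LinearMap.mem_ker, lineKernelVec_apply]
  constructor
  · intro h
    have := LinearIndependent.pair_iff.1 he (f e₁) (-f e₀) (by rw [← h]; module)
    exact ⟨neg_eq_zero.1 this.2, this.1⟩
  · rintro ⟨h₀, h₁⟩
    simp [h₀, h₁]

theorem lineKernelVec_mem_span_singleton_iff (he : LinearIndependent L ![e₀, e₁]) {u : W}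
    (hu : u ∈ span L {e₀, e₁}) (hu0 : u ≠ 0) (f : Dual L W) :
    lineKernelVec e₀ e₁ f ∈ L ∙ u ↔ f u = 0 := by
  obtain ⟨a, b, rfl⟩ := mem_span_pair.1 hu
  constructor
  · rintro h
    obtain ⟨c, hc⟩ := mem_span_singleton.1 h
    by_cases hc0 : c = 0
    · rw [hc0, zero_smul, eq_comm, lineKernelVec_eq_zero_iff he] at hc
      exact hc hu
    · have := apply_lineKernelVec (e₀ := e₀) (e₁ := e₁) f
      rw [← hc, map_smul, smul_eq_zero] at this
      exact this.resolve_left hc0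
  · intro h
    rw [map_add, map_smul, map_smul, smul_eq_mul, smul_eq_mul] at h
    rw [mem_span_singleton, lineKernelVec_apply]
    by_cases ha : a = 0
    · have hb : b ≠ 0 := by rintro rfl; simp [ha] at hu0
      have hf₁ : f e₁ = 0 := by simpa [ha, hb] using h
      refine ⟨-f e₀ / b, ?_⟩
      rw [ha, hf₁, zero_smul, zero_add, zero_sub, smul_smul, div_mul_cancel₀ _ hb, neg_smul]
    · refine ⟨f e₁ / a, ?_⟩
      rw [smul_add, smul_smul, smul_smul, div_mul_cancel₀ _ ha]
      have : f e₁ / a * b = -f e₀ := by field_simp; linear_combination h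
      rw [this]; module

end LineKernel

section Splash

variable {K L W : Type*} [Field K] [Field L] [Algebra K L]
  [AddCommGroup W] [Module L W] [Module K W]
  {ι : Type*} {V : Submodule K W} (bV : Basis ι K V) (v : Basis ι L W)

noncomputable def vanishingForms (P : Submodule L W) : Submodule K (Dual K V) :=
  (P.dualAnnihilator.restrictScalars K).comap (extendForm bV v)

theorem mem_vanishingForms {P : Submodule L W} {φ : Dual K V} :
    φ ∈ vanishingForms bV v P ↔ P ≤ LinearMap.ker (extendForm bV v φ) := by
  simp [vanishingForms, mem_dualAnnihilator, SetLike.le_def]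

variable [IsScalarTower K L W] {bV v}

theorem card_hyperplanes_eq_card_projectivization [Fintype ι] (hv : ∀ i, (bV i : W) = v i)
    (hV : finrank K V ≠ 0) (P : Submodule L W) :
    Nat.card {H : Submodule K W // H ≤ V ∧ finrank K H = finrank K V - 1 ∧
        P ≤ span L (H : Set W)} =
      Nat.card (ℙ K (vanishingForms bV v P)) := by
  have := Module.Finite.of_basis bV
  have hcontains : ∀ φ : Dual K V, φ ≠ 0 →
      (P ≤ span L ((LinearMap.ker φ).map V.subtype : Set W) ↔ φ ∈ vanishingForms bV v P) :=
    fun φ hφ => by rw [span_map_ker_eq_ker_extendForm hv hφ, mem_vanishingForms]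
  have hne : ∀ φ : {φ : vanishingForms bV v P // φ ≠ 0}, (φ : Dual K V) ≠ 0 :=
    fun φ h => φ.2 (Subtype.ext h)
  let F : ℙ K (vanishingForms bV v P) → {H : Submodule K W // H ≤ V ∧
      finrank K H = finrank K V - 1 ∧ P ≤ span L (H : Set W)} := Projectivization.lift
    (fun φ => ⟨(LinearMap.ker (φ : Dual K V)).map V.subtype, map_subtype_le _ _,
      by have := finrank_map_ker_add_one (hne φ); omega, (hcontains _ (hne φ)).2 φ.1.2⟩)
    (fun φ ψ t h => by
      have ht : t ≠ 0 := by rintro rfl; exact φ.2 (by rw [h, zero_smul])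
      exact Subtype.ext (by simp only [h, coe_smul, LinearMap.ker_smul _ _ ht]))
  refine (Nat.card_congr (Equiv.ofBijective F ⟨fun x y hxy => ?_, ?_⟩)).symm
  · induction x using Projectivization.ind with | h φ hφ => ?_
    induction y using Projectivization.ind with | h ψ hψ => ?_
    have hker : LinearMap.ker (φ : Dual K V) = LinearMap.ker (ψ : Dual K V) :=
      map_injective_of_injective V.injective_subtype (congrArg Subtype.val hxy)
    obtain ⟨a, ha⟩ := Module.Dual.exists_smul_eq_of_ker_eq (hne ⟨ψ, hψ⟩) hker
    exact (Projectivization.mk_eq_mk_iff' K _ _ hφ hψ).2 ⟨a, Subtype.ext ha⟩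
  · rintro ⟨H, hHV, hHr, hPH⟩
    obtain ⟨φ, hφ0, rfl⟩ := exists_ne_zero_map_ker_eq hHV (by omega)
    exact ⟨Projectivization.mk K ⟨φ, (hcontains φ hφ0).1 hPH⟩ (fun h => hφ0 (congrArg Subtype.val h)),
      rfl⟩

variable (bV v) (e₀ e₁ : W)

noncomputable def splashMap : Dual K V →ₗ[K] W :=
  (lineKernelVec e₀ e₁).restrictScalars K ∘ₗ extendForm bV v

variable {bV v e₀ e₁}

theorem splashMap_mem_span_singleton_iff (he : LinearIndependent L ![e₀, e₁]) {u : W}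
    (hu : u ∈ span L {e₀, e₁}) (hu0 : u ≠ 0) (φ : Dual K V) :
    splashMap bV v e₀ e₁ φ ∈ L ∙ u ↔ φ ∈ vanishingForms bV v (L ∙ u) := by
  rw [mem_vanishingForms, span_singleton_le_iff_mem, LinearMap.mem_ker, splashMap,
    LinearMap.comp_apply, LinearMap.restrictScalars_apply,
    lineKernelVec_mem_span_singleton_iff he hu hu0]

theorem range_splashMap_inf_span_singleton (he : LinearIndependent L ![e₀, e₁]) {u : W}
    (hu : u ∈ span L {e₀, e₁}) (hu0 : u ≠ 0) :
    LinearMap.range (splashMap bV v e₀ e₁) ⊓ (L ∙ u).restrictScalars K =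
      (vanishingForms bV v (L ∙ u)).map (splashMap bV v e₀ e₁) := by
  ext x
  simp only [mem_inf, LinearMap.mem_range, restrictScalars_mem, mem_map]
  constructor
  · rintro ⟨⟨φ, rfl⟩, hφ⟩
    exact ⟨φ, (splashMap_mem_span_singleton_iff he hu hu0 φ).1 hφ, rfl⟩
  · rintro ⟨φ, hφ, rfl⟩
    exact ⟨⟨φ, rfl⟩, (splashMap_mem_span_singleton_iff he hu hu0 φ).2 hφ⟩

theorem splashMap_injective [Fintype ι] (hv : ∀ i, (bV i : W) = v i)
    (he : LinearIndependent L ![e₀, e₁])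
    (hext : ∀ φ : Dual K V, φ ≠ 0 →
      ¬ span L {e₀, e₁} ≤ span L ((LinearMap.ker φ).map V.subtype : Set W)) :
    Function.Injective (splashMap bV v e₀ e₁) := by
  refine (injective_iff_map_eq_zero _).2 fun φ hφ => ?_
  by_contra h0
  apply hext φ h0
  rw [span_map_ker_eq_ker_extendForm hv h0, ← lineKernelVec_eq_zero_iff he]
  exact hφ

theorem bSet_range_splashMap [Fintype ι] (hv : ∀ i, (bV i : W) = v i)
    (he : LinearIndependent L ![e₀, e₁]) (hV : finrank K V ≠ 0)
    (hinj : Function.Injective (splashMap bV v e₀ e₁)) :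
    BSet L (LinearMap.range (splashMap bV v e₀ e₁) : Set W) =
      Splash K L V (span L {e₀, e₁}) (finrank K V) := by
  have := Module.Finite.of_basis bV
  ext P
  constructor
  · rintro ⟨_, ⟨φ, rfl⟩, h0, rfl⟩
    have hφ : φ ≠ 0 := by rintro rfl; exact h0 (map_zero _)
    refine ⟨finrank_span_singleton h0, span_singleton_le_iff_mem _ _ |>.2 (lineKernelVec_mem _),
      (LinearMap.ker φ).map V.subtype, map_subtype_le _ _,
      by have := finrank_map_ker_add_one hφ; omega, ?_⟩
    rw [span_map_ker_eq_ker_extendForm hv hφ, span_singleton_le_iff_mem]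
    exact apply_lineKernelVec _
  · rintro ⟨hP1, hPU, H, hHV, hHr, hPH⟩
    obtain ⟨u, hu0, rfl⟩ := exists_eq_span_singleton_of_finrank_eq_one hP1
    obtain ⟨φ, hφ0, rfl⟩ := exists_ne_zero_map_ker_eq hHV (by omega)
    have hu := hPU (mem_span_singleton_self u)
    have hφ := (splashMap_mem_span_singleton_iff he hu hu0 φ).2
      ((mem_vanishingForms bV v).2 (span_map_ker_eq_ker_extendForm hv hφ0 ▸ hPH))
    obtain ⟨c, hc⟩ := mem_span_singleton.1 hφ
    have h0 : splashMap bV v e₀ e₁ φ ≠ 0 := fun h => hφ0 (hinj (h.trans (map_zero _).symm))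
    have hc0 : c ≠ 0 := by rintro rfl; exact h0 (by rw [← hc, zero_smul])
    exact ⟨_, ⟨φ, rfl⟩, h0, by rw [← hc, span_singleton_smul_eq (IsUnit.mk0 c hc0)]⟩

end Splash

theorem weight_iff_number_of_hyperplanes_general
    (K L : Type*) [Field K] [Field L] [Algebra K L] [Fintype K]
    (q r : ℕ) (hq : Fintype.card K = q)
    (V : Submodule K (Fin r → L))
    (hVrank : Module.finrank K V = r)
    (hVspan : Submodule.span L (V : Set (Fin r → L)) = ⊤)
    (U : Submodule L (Fin r → L)) (hU : Module.finrank L U = 2)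
    (hext : ∀ H : Submodule K (Fin r → L), H ≤ V → Module.finrank K H = r - 1 →
      ¬ U ≤ Submodule.span L (H : Set (Fin r → L))) :
    ∃ U' : Submodule K (Fin r → L), U' ≤ U.restrictScalars K ∧
      Module.finrank K U' = r ∧
      BSet L (U' : Set (Fin r → L)) = Splash K L V U r ∧
      ∀ x ∈ Splash K L V U r, ∀ j : ℕ, 1 ≤ j →
        (Module.finrank K ↥(U' ⊓ x.restrictScalars K) = j ↔
          Nat.card {H : Submodule K (Fin r → L) //
              H ≤ V ∧ Module.finrank K H = r - 1 ∧
                x ≤ Submodule.span L (H : Set (Fin r → L))} =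
            (q ^ j - 1) / (q - 1)) := by
  have hq2 : 2 ≤ q := hq ▸ Fintype.one_lt_card
  have hV : finrank K V ≠ 0 := by
    have := finrank_le U
    rw [hU, finrank_fin_fun] at this
    omega
  have := Module.finite_of_finrank_pos (Nat.pos_of_ne_zero hV)
  obtain ⟨bV, v, hv⟩ := exists_basis_coe_eq hVspan hVrank (finrank_fin_fun L)
  obtain ⟨e₀, e₁, he, rfl⟩ := exists_linearIndependent_pair_span_eq hU
  have hinj := splashMap_injective hv he fun φ hφ =>
    hext _ (map_subtype_le _ _) (by have := finrank_map_ker_add_one hφ; omega)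
  refine ⟨LinearMap.range (splashMap bV v e₀ e₁), ?_, ?_, ?_, fun P hP j _ => ?_⟩
  · rintro _ ⟨φ, rfl⟩
    exact lineKernelVec_mem _
  · rw [LinearMap.finrank_range_of_inj hinj, Subspace.dual_finrank_eq, hVrank]
  · have := bSet_range_splashMap hv he hV hinj
    rwa [hVrank] at this
  obtain ⟨u, hu0, rfl⟩ := exists_eq_span_singleton_of_finrank_eq_one hP.1
  have hcount := card_hyperplanes_eq_card_projectivization hv hV (L ∙ u)
  rw [hVrank] at hcount
  rw [range_splashMap_inf_span_singleton he (hP.2.1 (mem_span_singleton_self u)) hu0,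
    ← (equivMapOfInjective _ hinj _).finrank_eq, hcount,
    Projectivization.card_of_finrank K _ rfl, Nat.card_eq_fintype_card, hq, ← Nat.geomSum_eq hq2,
    (Nat.geomSum_strictMono (by omega)).injective.eq_iff]

/-- in the splash `S(π₀, l_∞)`, a point has weight `j` if and only if
it lies on exactly `(q^j - 1)/(q - 1)` hyperplanes of the subgeometry `π₀`. -/
theorem weight_iff_number_of_hyperplanes
    (K L : Type*) [Field K] [Field L] [Algebra K L] [Fintype K] [Fintype L]
    (q r n : ℕ) (hq : Fintype.card K = q)
    (hr : 3 ≤ r) (hn : 2 ≤ n) (hrank : Module.finrank K L = n)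
    (V : Submodule K (Fin r → L))
    (hVrank : Module.finrank K V = r)
    (hVspan : Submodule.span L (V : Set (Fin r → L)) = ⊤)
    (U : Submodule L (Fin r → L)) (hU : Module.finrank L U = 2)
    (hext : ∀ H : Submodule K (Fin r → L), H ≤ V → Module.finrank K H = r - 1 →
      ¬ U ≤ Submodule.span L (H : Set (Fin r → L))) :
    ∃ U' : Submodule K (Fin r → L), U' ≤ U.restrictScalars K ∧
      Module.finrank K U' = r ∧
      BSet L (U' : Set (Fin r → L)) = Splash K L V U r ∧
      ∀ x ∈ Splash K L V U r, ∀ j : ℕ, 1 ≤ j →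
        (Module.finrank K ↥(U' ⊓ x.restrictScalars K) = j ↔
          Nat.card {H : Submodule K (Fin r → L) //
              H ≤ V ∧ Module.finrank K H = r - 1 ∧
                x ≤ Submodule.span L (H : Set (Fin r → L))} =
            (q ^ j - 1) / (q - 1)) :=
  weight_iff_number_of_hyperplanes_general K L q r hq V hVrank hVspan U hU hext
end

section
/- Let 3 ≤ r ≤ n. Let π₀ = B(V) be a q-subgeometry of PG(r-1,q^n) and l_∞ = PG(U) a line tangent to π₀ with centre T and not contained in the extension of any hyperplane of π₀. Then T ∈ S(π₀,l_∞) and there exists an r-dimensional K-subspace U₀ of U with B(U₀) = S(π₀,l_∞) and dim_K(U₀ ∩ T) = r-1; that is, the tangent splash S(π₀,l_∞) is an F_q-club of rank r with head the centre T. -/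
open Submodule Module

/-!
A `K`-basis of `V` is an `L`-basis of `W`, so every form `f ∈ V^*` extends to an `L`-linear form
`f_L` on `W`, and the extensions of the hyperplanes of `V` are exactly the kernels `ker f_L` with
`f ≠ 0`. Write `T = ⟨t⟩` with `t ∈ V` and `U = ⟨t, u⟩`. Since `U` lies in no `ker f_L`, the
hyperplane `ker f_L` meets `U` in the single point spanned by `f(t) u - f_L(u) t`. This vector is
`K`-linear and injective in `f`, so its values form an `r`-dimensional `K`-subspace `U₀ ⊆ U` with
`B(U₀)` the splash; it lies in `T` iff `f(t) = 0`, an `(r-1)`-dimensional condition on `f`.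
-/

open LinearMap (ker)

section Line

variable {L W : Type*} [Field L] [AddCommGroup W] [Module L W]

theorem finrank_inf_ker_add_one {U : Submodule L W} [FiniteDimensional L U] {φ : Dual L W}
    (hφ : ¬ U ≤ ker φ) : finrank L ↥(U ⊓ ker φ) + 1 = finrank L U := by
  have hne : φ ∘ₗ U.subtype ≠ 0 := fun h =>
    hφ fun x hx => by simpa using LinearMap.congr_fun h ⟨x, hx⟩
  rw [← Dual.finrank_ker_add_one_of_ne_zero hne, ← map_comap_subtype, finrank_map_subtype_eq,
    LinearMap.ker_comp]

theorem eq_inf_ker_of_finrank_eq_one {U P : Submodule L W} (hU : finrank L U = 2)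
    {φ : Dual L W} (hφ : ¬ U ≤ ker φ) (hP : finrank L P = 1) (hPU : P ≤ U) (hPφ : P ≤ ker φ) :
    P = U ⊓ ker φ := by
  have : FiniteDimensional L U := Module.finite_of_finrank_pos (by omega)
  refine eq_of_le_of_finrank_eq (le_inf hPU hPφ) ?_
  have := finrank_inf_ker_add_one hφ
  omega

theorem span_pair_eq_of_finrank_eq_two {U : Submodule L W} (hU : finrank L U = 2) {t u : W}
    (htU : t ∈ U) (huU : u ∈ U) (ht : t ≠ 0) (hut : u ∉ span L {t}) : span L {t, u} = U := by
  have : FiniteDimensional L U := Module.finite_of_finrank_pos (by omega)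
  have hind : LinearIndependent L ![t, u] :=
    (LinearIndependent.pair_iff' ht).mpr fun a h => hut (mem_span_singleton.mpr ⟨a, h⟩)
  refine eq_of_le_of_finrank_eq (span_le.mpr (Set.pair_subset htU huU)) ?_
  rw [hU, ← Matrix.range_cons_cons_empty t u ![], finrank_span_eq_card hind, Fintype.card_fin]

theorem exists_span_pair_eq {U : Submodule L W} (hU : finrank L U = 2) {t : W} (htU : t ∈ U)
    (ht : t ≠ 0) : ∃ u, u ∉ span L {t} ∧ span L {t, u} = U := by
  have hlt : span L {t} < U := by
    refine lt_of_le_of_ne (span_le.mpr (Set.singleton_subset_iff.mpr htU)) fun h => ?_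
    have := finrank_span_singleton (K := L) ht
    rw [h] at this
    omega
  obtain ⟨u, huU, hut⟩ := SetLike.exists_of_lt hlt
  exact ⟨u, hut, span_pair_eq_of_finrank_eq_two hU htU huU ht hut⟩

end Line

section ExtendDual

variable {K L W ι : Type*} [Field K] [Field L] [Algebra K L] [AddCommGroup W] [Module L W]
  [Module K W] [IsScalarTower K L W] {V : Submodule K W}

theorem exists_basis_eq_coe_of_span_eq_top (hspan : span L (V : Set W) = ⊤) [FiniteDimensional K V]
    (hV : finrank K V = finrank L W) :
    ∃ (b : Basis (Fin (finrank K V)) K V) (e : Basis (Fin (finrank K V)) L W), ∀ i, e i = b i := by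
  let b := Module.finBasis K V
  have hle : ⊤ ≤ span L (Set.range (V.subtype ∘ b)) := by
    rw [← hspan, span_le]
    intro v hv
    refine span_le_restrictScalars K L _ ?_
    rwa [Set.range_comp, ← map_span, b.span_eq, Submodule.map_top, range_subtype]
  exact ⟨b, basisOfTopLeSpanOfCardEqFinrank _ hle (by simpa using hV),
    fun i => congrFun (coe_basisOfTopLeSpanOfCardEqFinrank _ hle _) i⟩

-- The scalar extension of a form on `V` when `e i = b i` for all `i` (so that `W = L ⊗[K] V`).
noncomputable def extendDual (e : Basis ι L W) (b : Basis ι K V) : Dual K V →ₗ[K] Dual L W :=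
  (e.constr K).toLinearMap ∘ₗ LinearMap.pi fun i => Algebra.linearMap K L ∘ₗ Dual.eval K V (b i)

variable {e : Basis ι L W} {b : Basis ι K V}

theorem extendDual_apply_coe (heb : ∀ i, e i = b i) (f : Dual K V) (v : V) :
    extendDual e b f v = algebraMap K L (f v) := by
  have : (extendDual e b f).restrictScalars K ∘ₗ V.subtype = Algebra.linearMap K L ∘ₗ f :=
    b.ext fun i => by simp [extendDual, ← heb, Basis.constr_basis]
  exact LinearMap.congr_fun this v

theorem span_ker_eq_ker_extendDual (heb : ∀ i, e i = b i) {f : Dual K V} (hf : f ≠ 0) :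
    span L ((ker f).map V.subtype : Set W) = ker (extendDual e b f) := by
  refine le_antisymm (span_le.mpr ?_) fun w hw => ?_
  · rintro _ ⟨v, hv, rfl⟩
    simpa [extendDual_apply_coe heb] using hv
  obtain ⟨v₀, hv₀⟩ := LinearMap.surjective hf 1
  -- `w ↦ w - f_L w • v₀` takes `b i` to `b i - f (b i) • v₀ ∈ ker f`, hence `W` into the span
  have hproj : ⊤ ≤ (span L ((ker f).map V.subtype : Set W)).comap
      (LinearMap.id - (extendDual e b f).smulRight (v₀ : W)) := by
    rw [← e.span_eq, span_le]
    rintro _ ⟨i, rfl⟩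
    refine subset_span ⟨b i - f (b i) • v₀, by simp [hv₀], ?_⟩
    simp [heb, extendDual_apply_coe heb, algebraMap_smul]
  simpa [LinearMap.mem_ker.mp hw] using hproj (mem_top (x := w))

theorem exists_hyperplane_le_span_iff (heb : ∀ i, e i = b i) [FiniteDimensional K V]
    (hV : 0 < finrank K V) (P : Submodule L W) :
    (∃ H : Submodule K W, H ≤ V ∧ finrank K H = finrank K V - 1 ∧ P ≤ span L (H : Set W)) ↔
      ∃ f : Dual K V, f ≠ 0 ∧ P ≤ ker (extendDual e b f) := by
  constructor
  · rintro ⟨H, hHV, hH, hPH⟩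
    have hlt : H.comap V.subtype < ⊤ := by
      refine lt_top_of_finrank_lt_finrank ?_
      rw [(comapSubtypeEquivOfLe hHV).finrank_eq]
      omega
    obtain ⟨f, hf, hHf⟩ := (H.comap V.subtype).exists_le_ker_of_lt_top hlt
    refine ⟨f, hf, hPH.trans ?_⟩
    rw [← span_ker_eq_ker_extendDual heb hf]
    exact span_mono fun h hh => ⟨⟨h, hHV hh⟩, hHf hh, rfl⟩
  · rintro ⟨f, hf, hPf⟩
    refine ⟨(ker f).map V.subtype, map_subtype_le _ _, ?_, ?_⟩
    · rw [finrank_map_subtype_eq, ← Dual.finrank_ker_add_one_of_ne_zero hf, Nat.add_sub_cancel]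
    · rwa [span_ker_eq_ker_extendDual heb hf]

theorem span_singleton_mem_splash (heb : ∀ i, e i = b i) [FiniteDimensional K V]
    (hV : 2 ≤ finrank K V) {U : Submodule L W} {t : V} (ht : t ≠ 0) (htU : (t : W) ∈ U) :
    span L {(t : W)} ∈ Splash K L V U (finrank K V) := by
  have hlt : K ∙ t < ⊤ := lt_top_of_finrank_lt_finrank (by rw [finrank_span_singleton ht]; omega)
  obtain ⟨f, hf, htf⟩ := (K ∙ t).exists_le_ker_of_lt_top hlt
  refine ⟨finrank_span_singleton (by simpa using ht), span_le.mpr (by simpa using htU),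
    (exists_hyperplane_le_span_iff heb (by omega) _).mpr ⟨f, hf, ?_⟩⟩
  rw [span_le, Set.singleton_subset_iff, SetLike.mem_coe, LinearMap.mem_ker,
    extendDual_apply_coe heb, htf (mem_span_singleton_self t), map_zero]

end ExtendDual

section Club

variable {K L W ι : Type*} [Field K] [Field L] [Algebra K L] [AddCommGroup W] [Module L W]
  [Module K W] [IsScalarTower K L W] {V : Submodule K W} {e : Basis ι L W} {b : Basis ι K V}

noncomputable def clubMap (e : Basis ι L W) (b : Basis ι K V) (t : V) (u : W) :
    Dual K V →ₗ[K] W :=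
  (Dual.eval K V t).smulRight u -
    ((LinearMap.applyₗ u).restrictScalars K ∘ₗ extendDual e b).smulRight (t : W)

variable {t : V} {u : W}

theorem clubMap_apply (f : Dual K V) :
    clubMap e b t u f = f t • u - extendDual e b f u • (t : W) := rfl

theorem extendDual_clubMap (heb : ∀ i, e i = b i) (f : Dual K V) :
    extendDual e b f (clubMap e b t u f) = 0 := by
  rw [clubMap_apply, map_sub, LinearMap.map_smul_of_tower, map_smul, extendDual_apply_coe heb,
    smul_eq_mul, Algebra.smul_def, mul_comm, sub_self]

theorem clubMap_mem_span_singleton_iff (hut : u ∉ span L {(t : W)}) (f : Dual K V) :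
    clubMap e b t u f ∈ span L {(t : W)} ↔ f t = 0 := by
  rw [clubMap_apply, sub_mem_iff_left _ (smul_mem _ _ (mem_span_singleton_self _)),
    ← algebraMap_smul L]
  by_cases hft : f t = 0
  · simp [hft]
  · rw [smul_mem_iff _ ((map_ne_zero _).mpr hft)]
    exact iff_of_false hut hft

variable {U : Submodule L W}

theorem clubMap_mem (hUtu : span L {(t : W), u} = U) (f : Dual K V) :
    clubMap e b t u f ∈ U := by
  rw [clubMap_apply, ← hUtu]
  exact sub_mem (smul_of_tower_mem _ _ (subset_span (by simp)))
    (smul_mem _ _ (subset_span (by simp)))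

theorem clubMap_injective (heb : ∀ i, e i = b i) (ht : t ≠ 0) (hut : u ∉ span L {(t : W)})
    (hUtu : span L {(t : W), u} = U)
    (hUker : ∀ f : Dual K V, f ≠ 0 → ¬ U ≤ ker (extendDual e b f)) :
    Function.Injective (clubMap e b t u) := by
  refine (injective_iff_map_eq_zero _).mpr fun f hf => by_contra fun hf0 => hUker f hf0 ?_
  have hft : f t = 0 := (clubMap_mem_span_singleton_iff hut f).mp (hf ▸ zero_mem _)
  have hfu : extendDual e b f u = 0 := by
    rw [clubMap_apply, hft, zero_smul, zero_sub, neg_eq_zero, smul_eq_zero] at hf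
    exact hf.resolve_right (by simpa using ht)
  rw [← hUtu, span_le, Set.pair_subset_iff]
  exact ⟨by simp [extendDual_apply_coe heb, hft], hfu⟩

theorem bSet_range_clubMap_eq_splash (heb : ∀ i, e i = b i) [FiniteDimensional K V]
    (hV : 0 < finrank K V) (hU : finrank L U = 2) (ht : t ≠ 0) (hut : u ∉ span L {(t : W)})
    (hUtu : span L {(t : W), u} = U)
    (hUker : ∀ f : Dual K V, f ≠ 0 → ¬ U ≤ ker (extendDual e b f)) :
    BSet L (LinearMap.range (clubMap e b t u) : Set W) = Splash K L V U (finrank K V) := by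
  have hinj := clubMap_injective heb ht hut hUtu hUker
  have hline : ∀ f, f ≠ 0 → span L {clubMap e b t u f} = U ⊓ ker (extendDual e b f) :=
    fun f hf => eq_inf_ker_of_finrank_eq_one hU (hUker f hf)
      (finrank_span_singleton ((map_ne_zero_iff _ hinj).mpr hf))
      (span_le.mpr (by simpa using clubMap_mem hUtu f))
      (span_le.mpr (by simpa using extendDual_clubMap heb f))
  ext P
  simp only [Splash, Set.mem_ofPred_eq, exists_hyperplane_le_span_iff heb hV]
  constructor
  · rintro ⟨_, ⟨f, rfl⟩, hf, rfl⟩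
    have hf0 : f ≠ 0 := by rintro rfl; simp at hf
    exact ⟨finrank_span_singleton hf, (hline f hf0).le.trans inf_le_left, f, hf0,
      (hline f hf0).le.trans inf_le_right⟩
  · rintro ⟨hP, hPU, f, hf, hPf⟩
    exact ⟨clubMap e b t u f, LinearMap.mem_range_self _ f, (map_ne_zero_iff _ hinj).mpr hf,
      (eq_inf_ker_of_finrank_eq_one hU (hUker f hf) hP hPU hPf).trans (hline f hf).symm⟩

theorem finrank_range_clubMap_inf_span_singleton (heb : ∀ i, e i = b i) [FiniteDimensional K V]
    (ht : t ≠ 0) (hut : u ∉ span L {(t : W)}) (hUtu : span L {(t : W), u} = U)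
    (hUker : ∀ f : Dual K V, f ≠ 0 → ¬ U ≤ ker (extendDual e b f)) :
    finrank K ↥(LinearMap.range (clubMap e b t u) ⊓ (span L {(t : W)}).restrictScalars K) =
      finrank K V - 1 := by
  have hinf : LinearMap.range (clubMap e b t u) ⊓ (span L {(t : W)}).restrictScalars K =
      (ker (Dual.eval K V t)).map (clubMap e b t u) := by
    ext x
    simp only [mem_inf, LinearMap.mem_range, restrictScalars_mem, mem_map, LinearMap.mem_ker,
      Dual.eval_apply]
    constructor
    · rintro ⟨⟨f, rfl⟩, hf⟩
      exact ⟨f, (clubMap_mem_span_singleton_iff hut f).mp hf, rfl⟩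
    · rintro ⟨f, hf, rfl⟩
      exact ⟨⟨f, rfl⟩, (clubMap_mem_span_singleton_iff hut f).mpr hf⟩
  have heval : Dual.eval K V t ≠ 0 := fun h =>
    ht ((forall_dual_apply_eq_zero_iff K t).mp fun f => LinearMap.congr_fun h f)
  rw [hinf, (equivMapOfInjective _ (clubMap_injective heb ht hut hUtu hUker) _).symm.finrank_eq,
    ← Subspace.dual_finrank_eq, ← Dual.finrank_ker_add_one_of_ne_zero heval, Nat.add_sub_cancel]

end Club

theorem tangent_splash_is_club_general
    (K L : Type*) [Field K] [Field L] [Algebra K L]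
    (r : ℕ)
    (V : Submodule K (Fin r → L))
    (hVrank : Module.finrank K V = r)
    (hVspan : Submodule.span L (V : Set (Fin r → L)) = ⊤)
    (U : Submodule L (Fin r → L)) (hU : Module.finrank L U = 2)
    (T : Submodule L (Fin r → L))
    (htangent : {P | P ∈ BSet L (V : Set (Fin r → L)) ∧ P ≤ U} = {T})
    (hext : ∀ H : Submodule K (Fin r → L), H ≤ V → Module.finrank K H = r - 1 →
      ¬ U ≤ Submodule.span L (H : Set (Fin r → L))) :
    T ∈ Splash K L V U r ∧
      ∃ U₀ : Submodule K (Fin r → L), U₀ ≤ U.restrictScalars K ∧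
        Module.finrank K U₀ = r ∧
        BSet L (U₀ : Set (Fin r → L)) = Splash K L V U r ∧
        Module.finrank K ↥(U₀ ⊓ T.restrictScalars K) = r - 1 := by
  have hr : 2 ≤ r := by simpa [hU] using U.finrank_le
  have : FiniteDimensional K V := Module.finite_of_finrank_pos (by omega)
  obtain ⟨b, e, heb⟩ := exists_basis_eq_coe_of_span_eq_top hVspan (by simp [hVrank])
  obtain ⟨⟨t, htV, ht, rfl⟩, hTU⟩ : T ∈ {P | P ∈ BSet L (V : Set (Fin r → L)) ∧ P ≤ U} :=
    htangent ▸ rfl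
  lift t to V using htV
  have htU : (t : Fin r → L) ∈ U := hTU (mem_span_singleton_self _)
  obtain ⟨u, hut, hUtu⟩ := exists_span_pair_eq hU htU ht
  have hUker : ∀ f : Dual K V, f ≠ 0 → ¬ U ≤ ker (extendDual e b f) := fun f hf hUf => by
    obtain ⟨H, hHV, hH, hUH⟩ := (exists_hyperplane_le_span_iff heb (by omega) U).mpr ⟨f, hf, hUf⟩
    exact hext H hHV (by rw [hH, hVrank]) hUH
  have ht0 : t ≠ 0 := by simpa using ht
  have hS : Splash K L V U r = Splash K L V U (finrank K V) := by rw [hVrank]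
  refine ⟨hS ▸ span_singleton_mem_splash heb (by omega) ht0 htU,
    LinearMap.range (clubMap e b t u), ?_, ?_,
    (bSet_range_clubMap_eq_splash heb (by omega) hU ht0 hut hUtu hUker).trans hS.symm,
    (finrank_range_clubMap_inf_span_singleton heb ht0 hut hUtu hUker).trans (by rw [hVrank])⟩
  · rintro _ ⟨f, rfl⟩
    exact clubMap_mem hUtu f
  · rw [LinearMap.finrank_range_of_inj (clubMap_injective heb ht0 hut hUtu hUker),
      Subspace.dual_finrank_eq, hVrank]

/-- a tangent splash with centre `T` is an `F_q`-club of rank `r`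
with head `T`. -/
theorem tangent_splash_is_club
    (K L : Type*) [Field K] [Field L] [Algebra K L] [Fintype K] [Fintype L]
    (r n : ℕ) (hr : 3 ≤ r) (hrn : r ≤ n) (hrank : Module.finrank K L = n)
    (V : Submodule K (Fin r → L))
    (hVrank : Module.finrank K V = r)
    (hVspan : Submodule.span L (V : Set (Fin r → L)) = ⊤)
    (U : Submodule L (Fin r → L)) (hU : Module.finrank L U = 2)
    (T : Submodule L (Fin r → L))
    (htangent : {P | P ∈ BSet L (V : Set (Fin r → L)) ∧ P ≤ U} = {T})
    (hext : ∀ H : Submodule K (Fin r → L), H ≤ V → Module.finrank K H = r - 1 →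
      ¬ U ≤ Submodule.span L (H : Set (Fin r → L))) :
    T ∈ Splash K L V U r ∧
      ∃ U₀ : Submodule K (Fin r → L), U₀ ≤ U.restrictScalars K ∧
        Module.finrank K U₀ = r ∧
        BSet L (U₀ : Set (Fin r → L)) = Splash K L V U r ∧
        Module.finrank K ↥(U₀ ⊓ T.restrictScalars K) = r - 1 :=
  tangent_splash_is_club_general K L r V hVrank hVspan U hU T htangent hext
end

section
/- Let 3 ≤ r ≤ n. Let π₀ = B(V) be a q-subgeometry of PG(r-1,q^n) and l_∞ = PG(U) a line tangent to π₀ with centre T and not contained in the extension of any hyperplane of π₀, and write S(π₀,l_∞) = {T} ∪ A with T ∉ A. Let P be any point of A. Then there exist vectors u, v ∈ U and elements ρ₁, …, ρ_{r-2} ∈ L such that 1, ρ₁, …, ρ_{r-2} are linearly independent over K, T = L·u, P = L·v, and A = { L·(x·u + (∑_{i=1}^{r-2} y_i ρ_i)·u + v) : x, y₁, …, y_{r-2} ∈ K }. -/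
open Submodule Module

/-!
A `K`-basis of `V` is an `L`-basis of `L^r`, so every `K`-linear form `θ` on `V` extends to an
`L`-linear form `θ̃` on `L^r`, and the extensions of the hyperplanes of `V` are exactly the
kernels of the `θ̃` with `θ ≠ 0`. Write `T = ⟨u⟩` with `u ∈ V` and `P = ⟨v⟩`. Every point of
`l_∞` other than `T` is `⟨s u + v⟩`, and it lies in the splash iff `s θ(u) + θ̃(v) = 0` for some
`θ ≠ 0`. As `l_∞` lies in no `ker θ̃`, the map `θ ↦ (θ(u), θ̃(v))` is injective, so these `s`
form an affine `K`-subspace of `L` with direction `{θ̃(v) : θ(u) = 0}`, of dimension `r - 1`;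
it contains `0` because `P` is in the splash. A basis `λ, λρ₁, …, λρ_{r-2}` of it gives the
parametrization, with `λ u` in place of `u`.
-/

section DualExtension

variable {K L W : Type*} [Field K] [Field L] [Algebra K L] [AddCommGroup W] [Module L W]
  [Module K W] [IsScalarTower K L W] {V : Submodule K W} {ι : Type*}

theorem exists_basis_coe_eq_s12 [Fintype ι] (hV : span L (V : Set W) = ⊤) (bV : Basis ι K V)
    (hcard : Fintype.card ι = finrank L W) : ∃ b : Basis ι L W, ∀ i, b i = bV i := by
  have hspan : ⊤ ≤ span L (Set.range fun i => (bV i : W)) := by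
    rw [← span_span_of_tower K, Set.range_comp' Subtype.val bV, ← coe_subtype, span_image,
      bV.span_eq, map_subtype_top, hV]
  exact ⟨_, congrFun (coe_basisOfTopLeSpanOfCardEqFinrank _ hspan hcard)⟩

noncomputable def dualExtension (b : Basis ι L W) (bV : Basis ι K V) :
    Dual K V →ₗ[K] Dual L W :=
  (b.constr L).toLinearMap.restrictScalars K ∘ₗ
    LinearMap.pi fun i => Algebra.linearMap K L ∘ₗ LinearMap.applyₗ (bV i)

variable {b : Basis ι L W} {bV : Basis ι K V}

theorem dualExtension_apply_coe (hb : ∀ i, b i = bV i) (θ : Dual K V) (x : V) :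
    dualExtension b bV θ x = algebraMap K L (θ x) := by
  have : (dualExtension b bV θ).restrictScalars K ∘ₗ V.subtype = Algebra.linearMap K L ∘ₗ θ :=
    bV.ext fun i => by simp [dualExtension, ← hb]
  exact LinearMap.congr_fun this x

theorem exists_ne_zero_span_le_ker_dualExtension (hb : ∀ i, b i = bV i)
    {H : Submodule K W} (hHV : H ≤ V) (hH : H ≠ V) :
    ∃ θ : Dual K V, θ ≠ 0 ∧ span L (H : Set W) ≤ LinearMap.ker (dualExtension b bV θ) := by
  have hlt : H.comap V.subtype < ⊤ :=
    lt_top_iff_ne_top.2 fun h => hH (le_antisymm hHV (comap_subtype_eq_top.1 h))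
  obtain ⟨θ, hθ, hθH⟩ := exists_dual_map_eq_bot_of_lt_top hlt inferInstance
  refine ⟨θ, hθ, span_le.2 fun x hx => ?_⟩
  have hθx : θ ⟨x, hHV hx⟩ = 0 := by
    simpa [hθH] using mem_map_of_mem (f := θ) (p := H.comap V.subtype) (r := ⟨x, hHV hx⟩) hx
  simp [dualExtension_apply_coe hb θ ⟨x, hHV hx⟩, hθx]

theorem ker_dualExtension_le_span_ker (hb : ∀ i, b i = bV i) (hV : span L (V : Set W) = ⊤)
    {θ : Dual K V} (hθ : θ ≠ 0) :
    LinearMap.ker (dualExtension b bV θ) ≤ span L (map V.subtype (LinearMap.ker θ) : Set W) := by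
  obtain ⟨x₀, hx₀⟩ := LinearMap.surjective hθ 1
  set S := span L (map V.subtype (LinearMap.ker θ) : Set W)
  -- `w - θ̃ w • x₀` lies in `S` for all `w`, since it does for `w ∈ V` and `V` spans `W`.
  let g : W →ₗ[L] W := LinearMap.id - (dualExtension b bV θ).smulRight (x₀ : W)
  have hg : ⊤ ≤ S.comap g := by
    rw [← hV, span_le]
    intro x hx
    refine subset_span ⟨⟨x, hx⟩ - θ ⟨x, hx⟩ • x₀, by simp [hx₀], ?_⟩
    simp [g, dualExtension_apply_coe hb θ ⟨x, hx⟩, algebraMap_smul]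
  intro w hw
  simpa [g, LinearMap.mem_ker.1 hw] using hg (mem_top (x := w))

theorem exists_hyperplane_ker_dualExtension_le (hb : ∀ i, b i = bV i)
    (hV : span L (V : Set W) = ⊤) [FiniteDimensional K V] {θ : Dual K V} (hθ : θ ≠ 0) :
    ∃ H : Submodule K W, H ≤ V ∧ finrank K H = finrank K V - 1 ∧
      LinearMap.ker (dualExtension b bV θ) ≤ span L (H : Set W) := by
  refine ⟨_, map_subtype_le _ _, ?_, ker_dualExtension_le_span_ker hb hV hθ⟩
  rw [finrank_map_subtype_eq, ← Dual.finrank_ker_add_one_of_ne_zero hθ, Nat.add_sub_cancel]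

theorem span_singleton_mem_splash_iff (hb : ∀ i, b i = bV i) (hV : span L (V : Set W) = ⊤)
    [FiniteDimensional K V] (hV0 : finrank K V ≠ 0) {U : Submodule L W} {w : W} (hw : w ≠ 0) :
    span L {w} ∈ Splash K L V U (finrank K V) ↔
      w ∈ U ∧ ∃ θ : Dual K V, θ ≠ 0 ∧ dualExtension b bV θ w = 0 := by
  simp only [Splash, Set.mem_ofPred_eq, span_singleton_le_iff_mem, finrank_span_singleton hw,
    true_and]
  refine and_congr_right fun _ => ⟨?_, ?_⟩
  · rintro ⟨H, hHV, hH, hwH⟩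
    have hHV' : H ≠ V := by rintro rfl; omega
    obtain ⟨θ, hθ, hθH⟩ := exists_ne_zero_span_le_ker_dualExtension hb hHV hHV'
    exact ⟨θ, hθ, hθH hwH⟩
  · rintro ⟨θ, hθ, hθw⟩
    obtain ⟨H, hHV, hH, hker⟩ := exists_hyperplane_ker_dualExtension_le hb hV hθ
    exact ⟨H, hHV, hH, hker hθw⟩

end DualExtension

section AffineSolutions

variable {K L D : Type*} [Field K] [Field L] [Algebra K L] [AddCommGroup D] [Module K D]
  {δ : D →ₗ[K] K} {ψ : D →ₗ[K] L}

theorem exists_ne_zero_mul_add_eq_zero_iff_mem_map_ker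
    (hnd : ∀ θ, δ θ = 0 → ψ θ = 0 → θ = 0) {θ₁ : D} (hθ₁ : θ₁ ≠ 0) (hψθ₁ : ψ θ₁ = 0) (s : L) :
    (∃ θ, θ ≠ 0 ∧ s * algebraMap K L (δ θ) + ψ θ = 0) ↔ s ∈ map ψ (LinearMap.ker δ) := by
  have hδθ₁ : δ θ₁ ≠ 0 := fun h => hθ₁ (hnd θ₁ h hψθ₁)
  constructor
  · rintro ⟨θ, hθ, hs⟩
    have hδθ : δ θ ≠ 0 := fun h => hθ (hnd θ h (by simpa [h] using hs))
    -- correcting `θ` by a multiple of `θ₁` lands in `ker δ` without changing `ψ θ`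
    refine ⟨-(δ θ)⁻¹ • (θ - (δ θ / δ θ₁) • θ₁), ?_, ?_⟩
    · simp [hδθ₁]
    · have hψθ : ψ θ = -(s * algebraMap K L (δ θ)) := eq_neg_of_add_eq_zero_right hs
      rw [map_smul, map_sub, map_smul, hψθ₁, smul_zero, sub_zero, hψθ, Algebra.smul_def, map_neg,
        map_inv₀]
      have ha : algebraMap K L (δ θ) ≠ 0 := (map_ne_zero _).2 hδθ
      field_simp
  · rintro ⟨θ, hθ, rfl⟩
    refine ⟨(δ θ₁)⁻¹ • θ₁ - θ, fun h => ?_, ?_⟩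
    · have := congrArg δ h
      simp [LinearMap.mem_ker.1 hθ, hδθ₁] at this
    · simp [LinearMap.mem_ker.1 hθ, hδθ₁, hψθ₁]

theorem finrank_map_ker_add_one_s12 [FiniteDimensional K D]
    (hnd : ∀ θ, δ θ = 0 → ψ θ = 0 → θ = 0) (hδ : δ ≠ 0) :
    finrank K (map ψ (LinearMap.ker δ)) + 1 = finrank K D := by
  have hinj : Function.Injective (ψ ∘ₗ (LinearMap.ker δ).subtype) := by
    rw [← LinearMap.ker_eq_bot, LinearMap.ker_eq_bot']
    intro θ hθ
    exact Subtype.ext (hnd θ θ.2 hθ)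
  rw [← range_subtype (LinearMap.ker δ), ← LinearMap.range_comp,
    LinearMap.finrank_range_of_inj hinj, Dual.finrank_ker_add_one_of_ne_zero hδ]

end AffineSolutions

section Lines

variable {L W : Type*} [Field L] [AddCommGroup W] [Module L W]

theorem exists_ne_zero_eq_span_singleton {Q : Submodule L W} (hQ : finrank L Q = 1) :
    ∃ w : W, w ≠ 0 ∧ Q = span L {w} := by
  obtain ⟨w, hw, -⟩ := finrank_eq_one_iff'.1 hQ
  refine ⟨w, by simpa using hw, ?_⟩
  have := congrArg (map Q.subtype) ((finrank_eq_one_iff_of_nonzero w hw).1 hQ)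
  rw [map_span, map_subtype_top, Set.image_singleton] at this
  exact this.symm

theorem span_pair_eq_of_finrank_eq_two_s12 {U : Submodule L W} (hU : finrank L U = 2) {u v : W}
    (hu : u ∈ U) (hv : v ∈ U) (hu0 : u ≠ 0) (hvu : v ∉ span L {u}) : span L {u, v} = U := by
  have hli : LinearIndependent L ![v, u] :=
    linearIndependent_fin2.2 ⟨hu0, fun a h => hvu (mem_span_singleton.2 ⟨a, by simpa using h⟩)⟩
  have : FiniteDimensional L U := Module.finite_of_finrank_pos (by omega)
  refine eq_of_le_of_finrank_eq (span_le.2 (Set.insert_subset hu (Set.singleton_subset_iff.2 hv)))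
    ?_
  rw [hU, Set.pair_comm, ← Matrix.range_cons_cons_empty v u ![], finrank_span_eq_card hli,
    Fintype.card_fin]

theorem smul_add_notMem_span_singleton {u v : W} (hvu : v ∉ span L {u}) (s : L) :
    s • u + v ∉ span L {u} :=
  fun h => hvu <| (Submodule.add_mem_iff_right _ (smul_mem _ s (mem_span_singleton_self u))).1 h

theorem eq_span_or_exists_eq_span_smul_add {u v : W} {Q : Submodule L W} (hQ : finrank L Q = 1)
    (hQuv : Q ≤ span L {u, v}) : Q = span L {u} ∨ ∃ s : L, Q = span L {s • u + v} := by
  obtain ⟨w, hw, rfl⟩ := exists_ne_zero_eq_span_singleton hQ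
  obtain ⟨α, β, rfl⟩ := mem_span_pair.1 (span_singleton_le_iff_mem _ _ |>.1 hQuv)
  by_cases hβ : β = 0
  · left
    subst hβ
    have hα : α ≠ 0 := by rintro rfl; simp at hw
    simpa using span_singleton_smul_eq (isUnit_iff_ne_zero.2 hα) u
  · right
    refine ⟨β⁻¹ * α, ?_⟩
    rw [← span_singleton_smul_eq (isUnit_iff_ne_zero.2 (inv_ne_zero hβ)), smul_add, smul_smul,
      smul_smul, inv_mul_cancel₀ hβ, one_smul]

theorem eq_setOf_span_smul_add {S A : Set (Submodule L W)} {u v : W} {M : Set L}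
    (hS : ∀ Q ∈ S, finrank L Q = 1 ∧ Q ≤ span L {u, v}) (hSA : S = insert (span L {u}) A)
    (huA : span L {u} ∉ A) (hvu : v ∉ span L {u})
    (hM : ∀ s : L, span L {s • u + v} ∈ S ↔ s ∈ M) :
    A = {Q | ∃ s ∈ M, Q = span L {s • u + v}} := by
  ext Q
  constructor
  · intro hQ
    have hQS : Q ∈ S := hSA ▸ Set.mem_insert_of_mem _ hQ
    obtain ⟨hQ1, hQuv⟩ := hS Q hQS
    rcases eq_span_or_exists_eq_span_smul_add hQ1 hQuv with rfl | ⟨s, rfl⟩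
    · exact absurd hQ huA
    · exact ⟨s, (hM s).1 hQS, rfl⟩
  · rintro ⟨s, hs, rfl⟩
    have hsS := (hM s).2 hs
    rw [hSA] at hsS
    refine hsS.resolve_left fun h => smul_add_notMem_span_singleton hvu s ?_
    exact h ▸ mem_span_singleton_self _

end Lines

theorem exists_linearIndependent_fin_cons_span_eq {K X : Type*} [Field K] [AddCommGroup X]
    [Module K X] {M : Submodule K X} {m : ℕ} (hM : finrank K M = m + 1) {x : X} (hxM : x ∈ M)
    (hx : x ≠ 0) :
    ∃ ρ : Fin m → X, LinearIndependent K (Fin.cons x ρ : Fin (m + 1) → X) ∧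
      span K (Set.range (Fin.cons x ρ : Fin (m + 1) → X)) = M := by
  have : FiniteDimensional K M := Module.finite_of_finrank_pos (by omega)
  set x' : M := ⟨x, hxM⟩
  have hx' : x' ≠ 0 := fun h => hx (congrArg Subtype.val h)
  obtain ⟨N, hN⟩ := Submodule.exists_isCompl (K ∙ x')
  have hNm : finrank K N = m := by
    have := finrank_add_eq_of_isCompl hN
    rw [finrank_span_singleton hx', hM] at this
    omega
  have hli : ∀ a : K, ∀ y ∈ N, a • x' + y = 0 → a = 0 := by
    intro a y hy h
    have : a • x' ∈ (K ∙ x') ⊓ N :=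
      ⟨smul_mem _ _ (mem_span_singleton_self _), eq_neg_of_add_eq_zero_left h ▸ neg_mem hy⟩
    rw [hN.inf_eq_bot, mem_bot, smul_eq_zero] at this
    exact this.resolve_right hx'
  have hsp : ∀ z : M, ∃ a : K, z + a • x' ∈ N := by
    intro z
    obtain ⟨y, hy, n, hn, rfl⟩ := mem_sup.1 (hN.sup_eq_top ▸ mem_top : z ∈ (K ∙ x') ⊔ N)
    obtain ⟨a, rfl⟩ := mem_span_singleton.1 hy
    exact ⟨-a, by simpa using hn⟩
  set c := Basis.mkFinCons x' (finBasisOfFinrankEq K N hNm) hli hsp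
  have hc : M.subtype ∘ c = Fin.cons x fun i => (finBasisOfFinrankEq K N hNm i : X) := by
    funext j
    refine Fin.cases ?_ (fun i => ?_) j <;> simp [c, x']
  refine ⟨_, hc ▸ c.linearIndependent.map' M.subtype M.ker_subtype, ?_⟩
  rw [← hc, Set.range_comp, span_image, c.span_eq, map_subtype_top]

theorem exists_mem_iff_mul_fin_cons_one {K L : Type*} [Field K] [Field L] [Algebra K L]
    {M : Submodule K L} {m : ℕ} (hM : finrank K M = m + 1) :
    ∃ c : L, c ≠ 0 ∧ ∃ ρ : Fin m → L, LinearIndependent K (Fin.cons 1 ρ : Fin (m + 1) → L) ∧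
      ∀ t, t ∈ M ↔ ∃ (x : K) (y : Fin m → K),
        t = (algebraMap K L x + ∑ i, algebraMap K L (y i) * ρ i) * c := by
  obtain ⟨c, hcM, hc⟩ := exists_mem_ne_zero_of_ne_bot fun h : M = ⊥ => by
    rw [h, finrank_bot] at hM
    omega
  obtain ⟨ρ, hli, hspan⟩ := exists_linearIndependent_fin_cons_span_eq hM hcM hc
  have hcons : (Fin.cons 1 (fun i => ρ i * c⁻¹) : Fin (m + 1) → L) =
      LinearMap.mulRight K c⁻¹ ∘ Fin.cons c ρ := by
    funext j
    refine Fin.cases ?_ (fun i => ?_) j <;> simp [hc]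
  refine ⟨c, hc, fun i => ρ i * c⁻¹, ?_, fun t => ?_⟩
  · rw [hcons]
    exact hli.map' _ (LinearMap.ker_eq_bot.2 (mul_left_injective₀ (inv_ne_zero hc)))
  · rw [← hspan, mem_span_range_iff_exists_fun, Fin.exists_fin_succ_pi]
    simp [Fin.sum_univ_succ, Algebra.smul_def, add_mul, Finset.sum_mul, mul_assoc, hc, eq_comm]

theorem exists_submodule_forall_span_smul_add_mem_splash_iff
    {K L W : Type*} [Field K] [Field L] [Algebra K L] [AddCommGroup W] [Module L W]
    [Module K W] [IsScalarTower K L W] {V : Submodule K W} [FiniteDimensional K V]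
    (hV : span L (V : Set W) = ⊤) (hVW : finrank K V = finrank L W) (hV0 : finrank K V ≠ 0)
    {U : Submodule L W}
    (hext : ∀ H : Submodule K W, H ≤ V → finrank K H = finrank K V - 1 →
      ¬ U ≤ span L (H : Set W))
    {u v : W} (huV : u ∈ V) (hvu : v ∉ span L {u}) (hU : U = span L {u, v})
    (hv : span L {v} ∈ Splash K L V U (finrank K V)) :
    ∃ M : Submodule K L, finrank K M + 1 = finrank K V ∧
      ∀ s : L, span L {s • u + v} ∈ Splash K L V U (finrank K V) ↔ s ∈ M := by
  obtain ⟨b, hb⟩ := exists_basis_coe_eq_s12 hV (finBasis K V) (by simpa using hVW)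
  let δ : Dual K V →ₗ[K] K := Dual.eval K V ⟨u, huV⟩
  let ψ : Dual K V →ₗ[K] L :=
    (Dual.eval L W v).restrictScalars K ∘ₗ dualExtension b (finBasis K V)
  have hEu : ∀ θ, dualExtension b (finBasis K V) θ u = algebraMap K L (δ θ) :=
    fun θ => dualExtension_apply_coe hb θ ⟨u, huV⟩
  have huvU : ∀ s : L, s • u + v ∈ U := fun s =>
    hU ▸ add_mem (smul_mem _ s (subset_span (by simp))) (subset_span (by simp))
  have hmem : ∀ s : L, span L {s • u + v} ∈ Splash K L V U (finrank K V) ↔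
      ∃ θ, θ ≠ 0 ∧ s * algebraMap K L (δ θ) + ψ θ = 0 := fun s => by
    rw [span_singleton_mem_splash_iff hb hV hV0
      fun h : s • u + v = 0 => smul_add_notMem_span_singleton hvu s (h ▸ zero_mem _)]
    simp [huvU, hEu, ψ]
  have hnd : ∀ θ, δ θ = 0 → ψ θ = 0 → θ = 0 := by
    intro θ hδθ hψθ
    by_contra hθ
    obtain ⟨H, hHV, hH, hker⟩ := exists_hyperplane_ker_dualExtension_le hb hV hθ
    refine hext H hHV hH (le_trans ?_ hker)
    rw [hU, span_le]
    rintro _ (rfl | rfl)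
    · exact (hEu θ).trans (by rw [hδθ, map_zero])
    · exact hψθ
  obtain ⟨θ₁, hθ₁, hψθ₁⟩ := (hmem 0).1 (by simpa using hv)
  rw [zero_mul, zero_add] at hψθ₁
  have hδ : δ ≠ 0 := fun h => hθ₁ (hnd θ₁ (by rw [h, LinearMap.zero_apply]) hψθ₁)
  exact ⟨map ψ (LinearMap.ker δ), (finrank_map_ker_add_one_s12 hnd hδ).trans Subspace.dual_finrank_eq,
    fun s => (hmem s).trans (exists_ne_zero_mul_add_eq_zero_iff_mem_map_ker hnd hθ₁ hψθ₁ s)⟩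

theorem tangent_splash_parametrization_general
    (K L : Type*) [Field K] [Field L] [Algebra K L]
    (r : ℕ) (hr : 3 ≤ r)
    (V : Submodule K (Fin r → L))
    (hVrank : Module.finrank K V = r)
    (hVspan : Submodule.span L (V : Set (Fin r → L)) = ⊤)
    (U : Submodule L (Fin r → L)) (hU : Module.finrank L U = 2)
    (T : Submodule L (Fin r → L))
    (htangent : {P | P ∈ BSet L (V : Set (Fin r → L)) ∧ P ≤ U} = {T})
    (hext : ∀ H : Submodule K (Fin r → L), H ≤ V → Module.finrank K H = r - 1 →
      ¬ U ≤ Submodule.span L (H : Set (Fin r → L)))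
    (A : Set (Submodule L (Fin r → L))) (hTA : T ∉ A)
    (hsplash : Splash K L V U r = insert T A)
    (P : Submodule L (Fin r → L)) (hP : P ∈ A) :
    ∃ u v : Fin r → L, u ∈ U ∧ v ∈ U ∧
      ∃ ρ : Fin (r - 2) → L,
        LinearIndependent K (Fin.cons (1 : L) ρ : Fin (r - 2 + 1) → L) ∧
        T = Submodule.span L {u} ∧ P = Submodule.span L {v} ∧
        A = {Q | ∃ (x : K) (y : Fin (r - 2) → K),
          Q = Submodule.span L
            {(algebraMap K L x + ∑ i, algebraMap K L (y i) * ρ i) • u + v}} := by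
  have : FiniteDimensional K V := Module.finite_of_finrank_pos (by omega)
  replace hsplash : Splash K L V U (finrank K V) = insert T A := by rwa [hVrank]
  obtain ⟨⟨u, huV, hu0, rfl⟩, hTU⟩ : T ∈ {P | P ∈ BSet L (V : Set _) ∧ P ≤ U} := htangent ▸ rfl
  have hPS : P ∈ Splash K L V U (finrank K V) := hsplash ▸ Set.mem_insert_of_mem _ hP
  obtain ⟨v, hv0, rfl⟩ := exists_ne_zero_eq_span_singleton hPS.1
  have hvu : v ∉ span L {u} := by
    intro h
    obtain ⟨a, rfl⟩ := mem_span_singleton.1 h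
    have ha : a ≠ 0 := by rintro rfl; simp at hv0
    exact hTA (span_singleton_smul_eq (isUnit_iff_ne_zero.2 ha) u ▸ hP)
  have huU : u ∈ U := hTU (mem_span_singleton_self u)
  have hvU : v ∈ U := hPS.2.1 (mem_span_singleton_self v)
  have hUuv := span_pair_eq_of_finrank_eq_two_s12 hU huU hvU hu0 hvu
  obtain ⟨M, hMr, hM⟩ := exists_submodule_forall_span_smul_add_mem_splash_iff hVspan
    (by simpa using hVrank) (by omega) (fun H hHV hH => hext H hHV (hH.trans (by rw [hVrank])))
    huV hvu hUuv.symm hPS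
  obtain ⟨c, hc, ρ, hρ, hMρ⟩ := exists_mem_iff_mul_fin_cons_one (M := M) (m := r - 2) (by omega)
  refine ⟨c • u, v, smul_mem _ _ huU, hvU, ρ, hρ,
    (span_singleton_smul_eq (isUnit_iff_ne_zero.2 hc) u).symm, rfl, ?_⟩
  rw [eq_setOf_span_smul_add (fun Q hQ => ⟨hQ.1, hUuv ▸ hQ.2.1⟩) hsplash hTA hvu hM]
  ext Q
  simp [hMρ, smul_smul]

/-- algebraic description of a tangent splash `{T} ∪ A` with centre
`T`: the affine part `A` admits the parametrization
`A = { L·((x + ∑ yᵢρᵢ)·u + v) : x, yᵢ ∈ K }`. -/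
theorem tangent_splash_parametrization
    (K L : Type*) [Field K] [Field L] [Algebra K L] [Fintype K] [Fintype L]
    (r n : ℕ) (hr : 3 ≤ r) (hrn : r ≤ n) (hrank : Module.finrank K L = n)
    (V : Submodule K (Fin r → L))
    (hVrank : Module.finrank K V = r)
    (hVspan : Submodule.span L (V : Set (Fin r → L)) = ⊤)
    (U : Submodule L (Fin r → L)) (hU : Module.finrank L U = 2)
    (T : Submodule L (Fin r → L))
    (htangent : {P | P ∈ BSet L (V : Set (Fin r → L)) ∧ P ≤ U} = {T})
    (hext : ∀ H : Submodule K (Fin r → L), H ≤ V → Module.finrank K H = r - 1 →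
      ¬ U ≤ Submodule.span L (H : Set (Fin r → L)))
    (A : Set (Submodule L (Fin r → L))) (hTA : T ∉ A)
    (hsplash : Splash K L V U r = insert T A)
    (P : Submodule L (Fin r → L)) (hP : P ∈ A) :
    ∃ u v : Fin r → L, u ∈ U ∧ v ∈ U ∧
      ∃ ρ : Fin (r - 2) → L,
        LinearIndependent K (Fin.cons (1 : L) ρ : Fin (r - 2 + 1) → L) ∧
        T = Submodule.span L {u} ∧ P = Submodule.span L {v} ∧
        A = {Q | ∃ (x : K) (y : Fin (r - 2) → K),
          Q = Submodule.span L
            {(algebraMap K L x + ∑ i, algebraMap K L (y i) * ρ i) • u + v}} :=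
  tangent_splash_parametrization_general K L r hr V hVrank hVspan U hU T htangent hext A hTA hsplash
    P hP
end
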